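/- Let G be a TSI Polish group and let H be a closed normal subgroup of G that is non-archimedean (with the subspace topology). Then E(G) is Borel reducible to the product equivalence relation E(G/H) × E(G;0) on (G/H)^ω × G^ω, where G/H is the quotient topological group. -/

import Mathlib

open Filter Topology

/-- `E(G)`: the equivalence relation on `G^ω = ℕ → G` relating `x` and `y` iff
the sequence `n ↦ x n * (y n)⁻¹` converges in `G`. -/
def ERel (G : Type*) [Group G] [TopologicalSpace G] (x y : ℕ → G) : Prop :=
  ∃ g : G, Tendsto (fun n => x n * (y n)⁻¹) atTop (𝓝 g)

/-- Borel reducibility of binary relations on topological spaces, with respect to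
the Borel σ-algebras of the topologies. -/
def BorelReducible {X Y : Type*} [TopologicalSpace X] [TopologicalSpace Y]
    (E : X → X → Prop) (F : Y → Y → Prop) : Prop :=
  ∃ θ : X → Y, @Measurable X Y (borel X) (borel Y) θ ∧ ∀ x y, (E x y ↔ F (θ x) (θ y))

/-- `E(G;0)`: the relation on `G^ω` relating `x` and `y` iff `(x n)⁻¹ * y n → 1`. -/
def EZeroRel (G : Type*) [Group G] [TopologicalSpace G] (x y : ℕ → G) : Prop :=
  Tendsto (fun n => (x n)⁻¹ * y n) atTop (𝓝 (1 : G))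

/-- A topological group is non-archimedean if every neighborhood of the identity
contains an open subgroup. -/
def NonArchGroup (G : Type*) [Group G] [TopologicalSpace G] : Prop :=
  ∀ U ∈ 𝓝 (1 : G), ∃ V : Subgroup G, IsOpen (V : Set G) ∧ (V : Set G) ⊆ U

/-- A topological group is TSI if it admits a compatible two-sided invariant metric. -/
def TSIGroup (G : Type*) [Group G] [t : TopologicalSpace G] : Prop :=
  ∃ m : MetricSpace G, m.toUniformSpace.toTopologicalSpace = t ∧
    (∀ g h k : G, m.dist (g * h) (g * k) = m.dist h k) ∧
    (∀ g h k : G, m.dist (h * g) (k * g) = m.dist h k)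

/-!
The reduction is `x ↦ (π ∘ x, n ↦ (x n)⁻¹ * x (n + 1))`. For a two-sided invariant metric,
`dist (x n * (y n)⁻¹) (x (n+1) * (y (n+1))⁻¹) = dist ((x n)⁻¹ * x (n+1)) ((y n)⁻¹ * y (n+1))`, so
the second coordinates are `E(G;0)`-related iff `a n = x n * (y n)⁻¹` has consecutive distances
tending to `0`. If moreover `π ∘ a` converges, lift it to `b → g` with `b n H = a n H`; then
`h n = (b n)⁻¹ * a n` lies in `H` with consecutive distances tending to `0`. As `H` is
non-archimedean, the tail of `h` stays in a single coset of every open subgroup, so `h` is Cauchy.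
Finally a completely metrizable group is complete for a two-sided invariant metric: it is a dense
`Gδ` subgroup of its completion, hence all of it by Baire's theorem. So `h`, and with it `a = b h`,
converges.
-/

open Set TopologicalSpace

theorem Topology.IsEmbedding.isGδ_range {X Y : Type*} [TopologicalSpace X]
    [IsCompletelyMetrizableSpace X] [MetricSpace Y] {f : X → Y} (hf : IsEmbedding f) :
    IsGδ (range f) := by
  let _ := upgradeIsCompletelyMetrizable X
  set W : ℕ → Set Y := fun k => {y | ∃ O, IsOpen O ∧ y ∈ O ∧
    ∀ a ∈ f ⁻¹' O, ∀ b ∈ f ⁻¹' O, dist a b < 1 / ((k : ℝ) + 1)}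
  have hW_open : ∀ k, IsOpen (W k) := fun k =>
    isOpen_iff_forall_mem_open.2 fun _ ⟨O, hO, hyO, hsmall⟩ =>
      ⟨O, fun _ hz => ⟨O, hO, hz, hsmall⟩, hO, hyO⟩
  have range_subset_W : ∀ k, range f ⊆ W k := by
    rintro k _ ⟨p, rfl⟩
    have hε : (0 : ℝ) < 1 / ((k : ℝ) + 1) / 2 := by positivity
    have hball : Metric.ball p (1 / ((k : ℝ) + 1) / 2) ∈ comap f (𝓝 (f p)) := by
      rw [← hf.isInducing.nhds_eq_comap]
      exact Metric.ball_mem_nhds p hε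
    obtain ⟨U, hU, hUsub⟩ := mem_comap.1 hball
    obtain ⟨O, hOU, hO, hpO⟩ := mem_nhds_iff.1 hU
    refine ⟨O, hO, hpO, fun a ha b hb => ?_⟩
    have ha' := hUsub (hOU ha)
    have hb' := hUsub (hOU hb)
    rw [Metric.mem_ball] at ha' hb'
    linarith [dist_triangle_right a b p]
  -- Such a point has a Cauchy filter of preimages, whose limit is mapped to it.
  have inter_subset_range : closure (range f) ∩ ⋂ k, W k ⊆ range f := by
    rintro x ⟨hx_cl, hx_W⟩
    have hne : (comap f (𝓝 x)).NeBot :=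
      comap_neBot fun t ht => (mem_closure_iff_nhds.1 hx_cl t ht).elim
        fun _ ⟨hyt, a, hay⟩ => ⟨a, hay ▸ hyt⟩
    have hcauchy : Cauchy (comap f (𝓝 x)) := by
      refine Metric.cauchy_iff.2 ⟨hne, fun ε hε => ?_⟩
      obtain ⟨k, hk⟩ := exists_nat_one_div_lt hε
      obtain ⟨O, hO, hxO, hsmall⟩ := mem_iInter.1 hx_W k
      exact ⟨f ⁻¹' O, preimage_mem_comap (hO.mem_nhds hxO),
        fun a ha b hb => (hsmall a ha b hb).trans hk⟩
    obtain ⟨t, ht⟩ := CompleteSpace.complete hcauchy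
    exact ⟨t, tendsto_nhds_unique ((hf.continuous.tendsto t).mono_left ht) tendsto_comap⟩
  have hrange : range f = closure (range f) ∩ ⋂ k, W k :=
    Subset.antisymm (subset_inter subset_closure (subset_iInter range_subset_W))
      inter_subset_range
  rw [hrange]
  exact isClosed_closure.isGδ.inter (.iInter_of_isOpen hW_open)

theorem AddSubgroup.eq_top_of_dense_of_isGδ {A : Type*} [AddGroup A] [TopologicalSpace A]
    [IsTopologicalAddGroup A] [BaireSpace A] {S : AddSubgroup A} (hd : Dense (S : Set A))
    (hS : IsGδ (S : Set A)) : S = ⊤ := by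
  refine eq_top_iff.2 fun x _ => ?_
  let φ : A ≃ₜ A := (Homeomorph.neg A).trans (Homeomorph.addLeft x)
  have hdφ : Dense (φ ⁻¹' S) := hd.preimage φ.isOpenMap
  obtain ⟨g, hgS, hxg⟩ := (hd.inter_of_Gδ hS (hS.preimage φ.continuous) hdφ).nonempty
  have hsub : x + -g ∈ S := hxg
  simpa using S.add_mem hsub hgS

open UniformSpace in
theorem IsUniformAddGroup.completeSpace_of_isCompletelyMetrizableSpace {A : Type*} [AddGroup A]
    [MetricSpace A] [IsUniformAddGroup A] [IsCompletelyMetrizableSpace A] : CompleteSpace A := by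
  have hrange : range ((↑) : A → Completion A) = univ := by
    have h := AddSubgroup.eq_top_of_dense_of_isGδ (S := (Completion.toCompl : A →+ _).range)
      Completion.denseRange_coe Completion.coe_isometry.isEmbedding.isGδ_range
    exact congrArg SetLike.coe h
  rw [completeSpace_iff_isComplete_range (Completion.isUniformInducing_coe A), hrange]
  exact isComplete_univ

theorem IsUniformGroup.completeSpace_of_isCompletelyMetrizableSpace {G : Type*} [Group G]
    [MetricSpace G] [IsUniformGroup G] [IsCompletelyMetrizableSpace G] : CompleteSpace G :=
  have : IsUniformAddGroup (Additive G) := ⟨uniformContinuous_div (α := G)⟩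
  have : IsCompletelyMetrizableSpace (Additive G) := ‹IsCompletelyMetrizableSpace G›
  IsUniformAddGroup.completeSpace_of_isCompletelyMetrizableSpace (A := Additive G)

theorem NonArchGroup.tendsto_inv_mul_of_tendsto_inv_mul_succ {K : Type*} [Group K]
    [TopologicalSpace K] (hK : NonArchGroup K) {u : ℕ → K}
    (hu : Tendsto (fun n => (u n)⁻¹ * u (n + 1)) atTop (𝓝 1)) :
    Tendsto (fun p : ℕ × ℕ => (u p.1)⁻¹ * u p.2) atTop (𝓝 1) := by
  intro U hU
  obtain ⟨V, hV_open, hVU⟩ := hK U hU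
  obtain ⟨N, hN⟩ := eventually_atTop.1 (hu (hV_open.mem_nhds V.one_mem))
  have hcoset : ∀ n ≥ N, (u N)⁻¹ * u n ∈ V := by
    intro n hn
    induction n, hn using Nat.le_induction with
    | base => simp [V.one_mem]
    | succ n hn ih => simpa [mul_assoc] using V.mul_mem ih (hN n hn)
  rw [mem_map, mem_atTop_sets]
  refine ⟨(N, N), fun p hp => hVU ?_⟩
  simpa [mul_assoc] using V.mul_mem (V.inv_mem (hcoset p.1 hp.1)) (hcoset p.2 hp.2)

section IsometricGroup

variable {G : Type*} [Group G] [PseudoMetricSpace G]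

theorem dist_inv_mul_one [IsIsometricSMul G G] (a b : G) : dist (a⁻¹ * b) 1 = dist b a := by
  rw [← dist_mul_left a, mul_inv_cancel_left, mul_one]

theorem tendsto_inv_mul_nhds_one_iff [IsIsometricSMul G G] {ι : Type*} {l : Filter ι}
    {u v : ι → G} :
    Tendsto (fun i => (u i)⁻¹ * v i) l (𝓝 1) ↔ Tendsto (fun i => dist (u i) (v i)) l (𝓝 0) := by
  rw [tendsto_iff_dist_tendsto_zero]
  simp only [dist_inv_mul_one, dist_comm (v _)]

theorem IsIsometricSMul.dist_mul_mul_le [IsIsometricSMul G G] [IsIsometricSMul Gᵐᵒᵖ G]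
    (a₁ a₂ b₁ b₂ : G) : dist (a₁ * a₂) (b₁ * b₂) ≤ dist a₁ b₁ + dist a₂ b₂ := by
  calc dist (a₁ * a₂) (b₁ * b₂) ≤ dist (a₁ * a₂) (b₁ * a₂) + dist (b₁ * a₂) (b₁ * b₂) :=
        dist_triangle _ _ _
    _ = dist a₁ b₁ + dist a₂ b₂ := by rw [dist_mul_right, dist_mul_left]

theorem dist_mul_inv_mul_inv [IsIsometricSMul G G] [IsIsometricSMul Gᵐᵒᵖ G] (a b c d : G) :
    dist (a * b⁻¹) (c * d⁻¹) = dist (a⁻¹ * c) (b⁻¹ * d) := by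
  rw [← dist_mul_right _ _ d, inv_mul_cancel_right, mul_assoc, ← dist_mul_left a⁻¹,
    inv_mul_cancel_left, dist_comm]

theorem IsIsometricSMul.isUniformGroup [IsIsometricSMul G G] [IsIsometricSMul Gᵐᵒᵖ G] :
    IsUniformGroup G := by
  refine .mk' ?_ isometry_inv.uniformContinuous
  refine (LipschitzWith.of_dist_le_mul (K := 2) fun p q => ?_).uniformContinuous
  calc dist (p.1 * p.2) (q.1 * q.2) ≤ dist p.1 q.1 + dist p.2 q.2 :=
        IsIsometricSMul.dist_mul_mul_le _ _ _ _
    _ ≤ 2 * dist p q := by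
        rw [two_mul]; exact add_le_add (le_max_left _ _) (le_max_right _ _)

theorem NonArchGroup.cauchySeq_of_tendsto_dist_succ [IsIsometricSMul G G] {H : Subgroup G}
    (hH : NonArchGroup H) {h : ℕ → G} (hmem : ∀ n, h n ∈ H)
    (hd : Tendsto (fun n => dist (h n) (h (n + 1))) atTop (𝓝 0)) : CauchySeq h := by
  let k : ℕ → H := fun n => ⟨h n, hmem n⟩
  have hk : Tendsto (fun n => (k n)⁻¹ * k (n + 1)) atTop (𝓝 1) :=
    IsInducing.subtypeVal.tendsto_nhds_iff.2 (tendsto_inv_mul_nhds_one_iff.2 hd)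
  rw [cauchySeq_iff_tendsto_dist_atTop_0]
  exact tendsto_inv_mul_nhds_one_iff.1
    (IsInducing.subtypeVal.tendsto_nhds_iff.1 (hH.tendsto_inv_mul_of_tendsto_inv_mul_succ hk))

end IsometricGroup

theorem IsOpenMap.exists_tendsto_lift {X Y : Type*} [PseudoMetricSpace X] [TopologicalSpace Y]
    {f : X → Y} (hf : IsOpenMap f) {u : ℕ → X} {x : X}
    (hu : Tendsto (fun n => f (u n)) atTop (𝓝 (f x))) :
    ∃ v : ℕ → X, (∀ n, f (v n) = f (u n)) ∧ Tendsto v atTop (𝓝 x) := by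
  set D : ℕ → ℝ := fun n => Metric.infDist x (f ⁻¹' {f (u n)})
  have hD : Tendsto D atTop (𝓝 0) := by
    refine tendsto_order.2 ⟨fun ε hε => .of_forall fun n => hε.trans_le Metric.infDist_nonneg,
      fun ε hε => ?_⟩
    filter_upwards [hu (hf.image_mem_nhds (Metric.ball_mem_nhds x hε))] with n ⟨z, hz, hfz⟩
    exact (Metric.infDist_le_dist_of_mem (show z ∈ f ⁻¹' {f (u n)} from hfz)).trans_lt
      (Metric.mem_ball'.1 hz)
  have hv : ∀ n, ∃ v ∈ f ⁻¹' {f (u n)}, dist x v < D n + 1 / (n + 1) := fun n =>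
    (Metric.infDist_lt_iff (⟨u n, rfl⟩ : (f ⁻¹' {f (u n)}).Nonempty)).1
      (lt_add_of_pos_right _ Nat.one_div_pos_of_nat)
  choose v hv_mem hv_dist using hv
  refine ⟨v, hv_mem, tendsto_iff_dist_tendsto_zero.2 ?_⟩
  refine squeeze_zero (fun n => dist_nonneg)
    (fun n => (dist_comm (v n) x).trans_le (hv_dist n).le) ?_
  simpa using hD.add tendsto_one_div_add_atTop_nhds_zero_nat

theorem NonArchGroup.exists_tendsto_of_tendsto_quotient {G : Type*} [Group G] [MetricSpace G]
    [IsIsometricSMul G G] [IsIsometricSMul Gᵐᵒᵖ G] [CompleteSpace G] {H : Subgroup G}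
    (hH : NonArchGroup H) {a : ℕ → G} {c : G ⧸ H}
    (hc : Tendsto (fun n => (a n : G ⧸ H)) atTop (𝓝 c))
    (ha : Tendsto (fun n => dist (a n) (a (n + 1))) atTop (𝓝 0)) :
    ∃ g, Tendsto a atTop (𝓝 g) := by
  have := IsIsometricSMul.isUniformGroup (G := G)
  obtain ⟨g, rfl⟩ := QuotientGroup.mk_surjective c
  obtain ⟨b, hb_mk, hb⟩ := (QuotientGroup.isOpenMap_coe (N := H)).exists_tendsto_lift hc
  have hmem : ∀ n, (b n)⁻¹ * a n ∈ H := fun n => QuotientGroup.eq.1 (hb_mk n)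
  have hb_inv : Tendsto (fun n => dist (b n)⁻¹ (b (n + 1))⁻¹) atTop (𝓝 0) := by
    simpa using hb.inv.dist (hb.inv.comp (tendsto_add_atTop_nat 1))
  have hd : Tendsto (fun n => dist ((b n)⁻¹ * a n) ((b (n + 1))⁻¹ * a (n + 1))) atTop (𝓝 0) := by
    refine squeeze_zero (fun n => dist_nonneg)
      (fun n => IsIsometricSMul.dist_mul_mul_le _ _ _ _) ?_
    simpa using hb_inv.add ha
  obtain ⟨h, hh⟩ := cauchySeq_tendsto_of_complete (hH.cauchySeq_of_tendsto_dist_succ hmem hd)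
  exact ⟨g * h, (hb.mul hh).congr fun n => mul_inv_cancel_left (b n) (a n)⟩

theorem stmt15_general {G : Type*} [Group G] [TopologicalSpace G] [PolishSpace G]
    (htsi : TSIGroup G)
    (H : Subgroup G) [H.Normal]
    (hna : NonArchGroup ↥H) :
    BorelReducible (ERel G)
      (fun p q : (ℕ → G ⧸ H) × (ℕ → G) => ERel (G ⧸ H) p.1 q.1 ∧ EZeroRel G p.2 q.2) := by
  obtain ⟨m, hm, hl, hr⟩ := htsi
  let _ : MetricSpace G := m.replaceTopology hm.symm
  have : IsIsometricSMul G G := ⟨fun c => Isometry.of_dist_eq (hl c)⟩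
  have : IsIsometricSMul Gᵐᵒᵖ G := ⟨fun c => Isometry.of_dist_eq (hr c.unop)⟩
  have := IsIsometricSMul.isUniformGroup (G := G)
  have := IsUniformGroup.completeSpace_of_isCompletelyMetrizableSpace (G := G)
  refine ⟨fun x => (fun n => (x n : G ⧸ H), fun n => (x n)⁻¹ * x (n + 1)),
    Continuous.borel_measurable (by fun_prop), fun x y => ?_⟩
  simp only [ERel, EZeroRel, ← QuotientGroup.mk_inv, ← QuotientGroup.mk_mul,
    tendsto_inv_mul_nhds_one_iff, ← dist_mul_inv_mul_inv]
  constructor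
  · rintro ⟨g, hg⟩
    exact ⟨⟨g, (QuotientGroup.continuous_mk.tendsto g).comp hg⟩,
      by simpa using hg.dist (hg.comp (tendsto_add_atTop_nat 1))⟩
  · rintro ⟨⟨c, hc⟩, hd⟩
    exact hna.exists_tendsto_of_tendsto_quotient hc hd

/-- Let `G` be a TSI Polish group and `H` a closed normal non-archimedean subgroup.
Then `E(G) ≤_B E(G/H) × E(G;0)`. -/
theorem stmt15 {G : Type*} [Group G] [TopologicalSpace G] [IsTopologicalGroup G] [PolishSpace G]
    (htsi : TSIGroup G)
    (H : Subgroup G) [H.Normal] (hclosed : IsClosed (H : Set G))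
    (hna : NonArchGroup ↥H) :
    BorelReducible (ERel G)
      (fun p q : (ℕ → G ⧸ H) × (ℕ → G) => ERel (G ⧸ H) p.1 q.1 ∧ EZeroRel G p.2 q.2) :=
  stmt15_general htsi H hna
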